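/- arXiv:1009.3820 — 3 statements merged into one kernel-verified Lean document; each statement's English description precedes it below -/
import Mathlib

section
/- Let U be a list of cyclically reduced words in F_n. In the Whitehead graph W(U), consider an edge f_0 and vertices x_1, x_2, ..., x_l with l > 0, such that x_{i+1} ≠ x_i^{-1} for i = 1,...,l (indices taken modulo l, so also x_1 ≠ x_l^{-1}). Suppose that the composition σ_{x_l^{-1}} ∘ σ_{x_{l-1}^{-1}} ∘ ... ∘ σ_{x_1^{-1}}(f_0) is well-defined and equal to f_0. Then the word x_1 x_2 ... x_l is a nontrivial power of a cyclic conjugation of a word in U. -/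
open scoped Classical

namespace KO

noncomputable section

/-- The number of positions of a list satisfying a predicate. -/
def countP {α : Type*} (L : List α) (P : α → Prop) : ℕ :=
  {i : Fin L.length | P (L.get i)}.ncard

/-- cyclic successor in `Fin m` -/
def cyc {m : ℕ} (i : Fin m) : Fin m := ⟨(i.val + 1) % m, Nat.mod_lt _ i.pos⟩

/-- cyclic predecessor in `Fin m` -/
def cycPrev {m : ℕ} (i : Fin m) : Fin m := ⟨(i.val + m - 1) % m, Nat.mod_lt _ i.pos⟩

/-! ## Letters and words in free groups -/

/-- A letter: a generator together with a sign (`true` = positive). -/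
abbrev Letter (n : ℕ) := Fin n × Bool

/-- The inverse letter. -/
def Letter.inv {n : ℕ} (x : Letter n) : Letter n := (x.1, !x.2)

/-- A reduced word (element of the free group) is cyclically reduced if its last letter
does not cancel with its first letter. -/
def CyclicallyReduced {n : ℕ} (w : FreeGroup (Fin n)) : Prop :=
  ∀ p q : Letter n, w.toWord.head? = some p → w.toWord.getLast? = some q →
    ¬ (q.1 = p.1 ∧ q.2 = !p.2)

/-- Sum of the lengths of the words in a list. -/
def totalLength {n : ℕ} (U : List (FreeGroup (Fin n))) : ℕ :=
  (U.map fun u => u.toWord.length).sum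

/-- A list of words is minimal if no automorphism of the free group reduces the total length. -/
def Minimal {n : ℕ} (U : List (FreeGroup (Fin n))) : Prop :=
  ∀ φ : FreeGroup (Fin n) ≃* FreeGroup (Fin n),
    totalLength U ≤ totalLength (U.map fun u => φ u)

/-- A list of words is `k`-regular if every generator is used (with either sign) exactly `k`
times in total among the words of the list. -/
def KRegular {n : ℕ} (k : ℕ) (U : List (FreeGroup (Fin n))) : Prop :=
  ∀ i : Fin n, (U.map fun u => (u.toWord.filter fun p => decide (p.1 = i)).length).sum = k

/-- `x` is conjugate into the subgroup `A`. -/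
def ConjugateInto {G : Type*} [Group G] (x : G) (A : Subgroup G) : Prop :=
  ∃ g : G, g⁻¹ * x * g ∈ A

/-- `G` is the internal free product of its subgroups `A` and `B`. -/
def IsInternalFreeProduct {G : Type*} [Group G] (A B : Subgroup G) : Prop :=
  Function.Bijective (Monoid.Coprod.lift A.subtype B.subtype)

/-- `G` is the internal free product of the family of subgroups `H`. -/
def IsInternalFreeProductI {G : Type*} [Group G] {ι : Type*} (H : ι → Subgroup G) : Prop :=
  Function.Bijective (Monoid.CoprodI.lift fun i => (H i).subtype)

/-- A list of words in a free group is diskbusting if the free group admits no nontrivial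
free product decomposition such that every word of the list is conjugate into one of the
two factors. -/
def Diskbusting {n : ℕ} (U : List (FreeGroup (Fin n))) : Prop :=
  ¬ ∃ A B : Subgroup (FreeGroup (Fin n)), A ≠ ⊥ ∧ B ≠ ⊥ ∧ IsInternalFreeProduct A B ∧
      ∀ u ∈ U, ConjugateInto u A ∨ ConjugateInto u B

/-! ## The double of a free group along a list of words -/

/-- The inclusion of `F_n` onto the first copy of the generators. -/
def toA {n : ℕ} (r : ℕ) : FreeGroup (Fin n) →* FreeGroup ((Fin n ⊕ Fin n) ⊕ Fin r) :=
  FreeGroup.map (fun i => Sum.inl (Sum.inl i))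

/-- The inclusion of `F_n` onto the second copy of the generators. -/
def toB {n : ℕ} (r : ℕ) : FreeGroup (Fin n) →* FreeGroup ((Fin n ⊕ Fin n) ⊕ Fin r) :=
  FreeGroup.map (fun i => Sum.inl (Sum.inr i))

/-- The relators `u₁ v₁⁻¹` and `tᵢ⁻¹ uᵢ tᵢ vᵢ⁻¹` (`i = 2, …, r`) of the double `D(U)`. -/
def doubleRels {n : ℕ} (U : List (FreeGroup (Fin n))) :
    Set (FreeGroup ((Fin n ⊕ Fin n) ⊕ Fin (U.length - 1))) :=
  { r | ∃ i : Fin U.length,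
      ((i : ℕ) = 0 ∧ r = toA _ (U.get i) * (toB _ (U.get i))⁻¹) ∨
      (∃ j : Fin (U.length - 1), (i : ℕ) = (j : ℕ) + 1 ∧
        r = (FreeGroup.of (Sum.inr j))⁻¹ * toA _ (U.get i) * FreeGroup.of (Sum.inr j) *
            (toB _ (U.get i))⁻¹) }

/-- The double `D(U)` of the free group `F_n` along the list of words `U`, given by the
presentation `⟨𝒜, ℬ, t₂, …, t_r ∣ u₁ = v₁, uᵢ^{tᵢ} = vᵢ (i = 2, …, r)⟩`. -/
abbrev Double {n : ℕ} (U : List (FreeGroup (Fin n))) :=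
  PresentedGroup (doubleRels U)

/-! ## Surface groups -/

open scoped commutatorElement in
/-- The surface relator `∏ [aᵢ, bᵢ]`. -/
def surfaceRelO (g : ℕ) : FreeGroup (Fin g ⊕ Fin g) :=
  (List.ofFn fun i : Fin g => ⁅(FreeGroup.of (Sum.inl i) : FreeGroup (Fin g ⊕ Fin g)), FreeGroup.of (Sum.inr i)⁆).prod

/-- The fundamental group of the closed orientable surface of genus `g`. -/
abbrev OrientableSurfaceGroup (g : ℕ) := PresentedGroup ({surfaceRelO g} : Set _)

/-- The surface relator `a₁² ⋯ a_g²`. -/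
def surfaceRelN (g : ℕ) : FreeGroup (Fin g) :=
  (List.ofFn fun i : Fin g => (FreeGroup.of i) ^ 2).prod

/-- The fundamental group of the closed non-orientable surface of genus `g`. -/
abbrev NonorientableSurfaceGroup (g : ℕ) := PresentedGroup ({surfaceRelN g} : Set _)

/-- A hyperbolic surface group: the fundamental group of a closed surface of negative
Euler characteristic. -/
def IsHyperbolicSurfaceGroup (H : Type*) [Group H] : Prop :=
  (∃ g : ℕ, 2 ≤ g ∧ Nonempty (H ≃* OrientableSurfaceGroup g)) ∨
  (∃ g : ℕ, 3 ≤ g ∧ Nonempty (H ≃* NonorientableSurfaceGroup g))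

/-- `G` contains a hyperbolic surface group. -/
def HasHyperbolicSurfaceSubgroup (G : Type*) [Group G] : Prop :=
  ∃ H : Subgroup G, IsHyperbolicSurfaceGroup H

/-! ## Ends of groups -/

/-- The Cayley graph of a group with respect to a set of generators. -/
def cayleyGraph (G : Type*) [Group G] (S : Set G) : SimpleGraph G where
  Adj x y := x ≠ y ∧ (x⁻¹ * y ∈ S ∨ y⁻¹ * x ∈ S)
  symm := ⟨fun x y h => ⟨h.1.symm, h.2.symm⟩⟩
  loopless := ⟨fun x h => h.1 rfl⟩

/-- A group is one-ended if the Cayley graph with respect to any finite generating set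
has exactly one end. -/
def OneEnded (G : Type*) [Group G] : Prop :=
  ∀ S : Set G, S.Finite → Subgroup.closure S = ⊤ →
    Nat.card ((cayleyGraph G S).end) = 1

/-! ## Multigraphs (loops and parallel edges allowed) -/

/-- A multigraph on a vertex type `V` with edge type `E`: each edge has an unordered
pair of endpoints. -/
structure Multigraph (V : Type*) (E : Type*) where
  ends : E → Sym2 V

namespace Multigraph

variable {V E : Type*} (G : Multigraph V E)

/-- The set of non-loop edges incident with `v` (denoted `δ(v)`). -/
def edgeNbhd (v : V) : Set E := {e | v ∈ G.ends e ∧ ¬ (G.ends e).IsDiag}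

/-- The set of edges with exactly one endpoint in `X` (denoted `δ(X)`). -/
def cut (X : Set V) : Set E := {e | ∃ a b, G.ends e = s(a, b) ∧ a ∈ X ∧ b ∉ X}

/-- Degree of a vertex: loops counted twice. -/
def deg (v : V) : ℕ :=
  2 * {e | G.ends e = Sym2.diag v}.ncard + (G.edgeNbhd v).ncard

/-- Two vertices joined by an edge. -/
def Adj (a b : V) : Prop := ∃ e, G.ends e = s(a, b)

/-- Two vertices in the same connected component. -/
def Reach : V → V → Prop := Relation.EqvGen G.Adj

/-- The connected component of a vertex. -/
def component (v : V) : Set V := {x | G.Reach v x}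

/-- A path from `x` to `y` in a multigraph: distinct vertices, distinct edges. -/
structure PathIn (x y : V) where
  len : ℕ
  v : Fin (len + 1) → V
  e : Fin len → E
  vinj : Function.Injective v
  einj : Function.Injective e
  hx : v 0 = x
  hy : v (Fin.last len) = y
  hends : ∀ i : Fin len, G.ends (e i) = s(v i.castSucc, v i.succ)

/-- The local edge-connectivity `λ(x,y)`: the maximum number of pairwise edge-disjoint
paths from `x` to `y`. -/
def localEdgeConn (x y : V) : ℕ :=
  sSup {k : ℕ | ∃ P : Fin k → G.PathIn x y,
    ∀ i j, i ≠ j → ∀ a b, (P i).e a ≠ (P j).e b}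

/-- A cycle in a multigraph `G`: a connected 2-regular subgraph, given by cyclically
arranged distinct vertices and distinct edges. -/
structure CycleIn where
  len : ℕ
  pos : 0 < len
  v : Fin len → V
  e : Fin len → E
  vinj : Function.Injective v
  einj : Function.Injective e
  hends : ∀ i : Fin len, G.ends (e i) = s(v i, v (cyc i))

variable {G}

/-- The cycle `C` contains the edge `x`. -/
def CycleIn.HasEdge (C : G.CycleIn) (x : E) : Prop := ∃ i, C.e i = x

/-- The number of cycles in the list `L` containing both edges `x` and `y`. -/
def countBoth (L : List G.CycleIn) (x y : E) : ℕ :=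
  countP L fun C => C.HasEdge x ∧ C.HasEdge y

/-- The number of cycles in the list `L` containing the edge `x`. -/
def countWith (L : List G.CycleIn) (x : E) : ℕ :=
  countP L fun C => C.HasEdge x

/-- Two edges `a = b`, or `a` and `b` share no vertex (so `{a, b}` is a matching). -/
def IsMatchingPair (G : Multigraph V E) (a b : E) : Prop :=
  a = b ∨ ∀ z : V, ¬ (z ∈ G.ends a ∧ z ∈ G.ends b)

end Multigraph

/-! ## The Whitehead graph of a list of words -/

/-- The letter list of the `i`-th word of `U`. -/
def wordAt {n : ℕ} (U : List (FreeGroup (Fin n))) (i : Fin U.length) : List (Letter n) :=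
  (U.get i).toWord

/-- Edges of the Whitehead graph `W(U)`: one edge for each position (cyclic) in each word. -/
def WEdge {n : ℕ} (U : List (FreeGroup (Fin n))) : Type :=
  Σ i : Fin U.length, Fin (wordAt U i).length

/-- The letter at a position. -/
def wLetter {n : ℕ} {U : List (FreeGroup (Fin n))} (e : WEdge U) : Letter n :=
  (wordAt U e.1).get e.2

/-- The cyclically next position. -/
def wNext {n : ℕ} {U : List (FreeGroup (Fin n))} (e : WEdge U) : WEdge U := ⟨e.1, cyc e.2⟩

/-- The cyclically previous position. -/
def wPrev {n : ℕ} {U : List (FreeGroup (Fin n))} (e : WEdge U) : WEdge U := ⟨e.1, cycPrev e.2⟩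

/-- The Whitehead graph `W(U)`: vertices are the letters `a₁^{±1}, …, a_n^{±1}`, and each
length-2 cyclic subword `xy` of a word of `U` gives an edge joining `x` and `y⁻¹`. -/
def whiteheadGraph {n : ℕ} (U : List (FreeGroup (Fin n))) : Multigraph (Letter n) (WEdge U) :=
  ⟨fun e => s(wLetter e, Letter.inv (wLetter (wNext e)))⟩

/-- The connecting map `σ_v` associated with `W(U)` at the vertex `v`: the edge coming
from the length-2 cyclic subword `x_i x_{i+1}` (with `x_{i+1}⁻¹ = v`) is sent to the edge
coming from the following length-2 cyclic subword `x_{i+1} x_{i+2}`. -/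
def connMap {n : ℕ} (U : List (FreeGroup (Fin n))) (v : Letter n) (e : WEdge U) : WEdge U :=
  if Letter.inv (wLetter (wNext e)) = v then wNext e else wPrev e

/-- The connecting-map step relation: `σ_v(e) = e'` (in particular `e ∈ δ(v)`). -/
def ConnStep {n : ℕ} (U : List (FreeGroup (Fin n))) (v : Letter n) (e e' : WEdge U) : Prop :=
  e ∈ (whiteheadGraph U).edgeNbhd v ∧
  ((Letter.inv (wLetter (wNext e)) = v ∧ e' = wNext e) ∨
   (wLetter e = v ∧ e' = wPrev e))


/-! ## Polygonal surfaces and polygonality -/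

/-- Combinatorial data for a side-pairing on polygonal disks `P₁, …, P_m`, whose sides
carry letters (an orientation and a label by generators), together with, for each pair of
identified sides, the information `par` of whether the gluing homeomorphism matches the two
boundary orientations. -/
structure PolygonalSurface (n : ℕ) where
  m : ℕ
  L : Fin m → ℕ
  Lpos : ∀ i, 0 < L i
  lab : (Σ i : Fin m, Fin (L i)) → Letter n
  pair : (Σ i : Fin m, Fin (L i)) → (Σ i : Fin m, Fin (L i))
  pair_invol : ∀ s, pair (pair s) = s
  pair_ne : ∀ s, pair s ≠ s
  par : (Σ i : Fin m, Fin (L i)) → Bool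
  par_pair : ∀ s, par (pair s) = par s
  lab_pair : ∀ s, lab (pair s) = if par s then lab s else Letter.inv (lab s)

namespace PolygonalSurface

variable {n : ℕ} (P : PolygonalSurface n)

/-- The next side along the boundary of a polygon. -/
def nextSide (s : Σ i : Fin P.m, Fin (P.L i)) : Σ i : Fin P.m, Fin (P.L i) :=
  ⟨s.1, cyc s.2⟩

/-- The identifications of the polygon corners induced by the side-pairing: the corner
`s` is the tail of the side `s` and the head of the preceding side. -/
def cornerRel (c d : Σ i : Fin P.m, Fin (P.L i)) : Prop :=
  ∃ s, (c = s ∧ d = (if P.par s then P.pair s else P.nextSide (P.pair s))) ∨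
       (c = P.nextSide s ∧ d = (if P.par s then P.nextSide (P.pair s) else P.pair s))

/-- The vertex set of the quotient closed surface. -/
def VertexSpace : Type _ := Quot P.cornerRel

/-- The vertex of the quotient surface corresponding to a corner. -/
def vClass (c : Σ i : Fin P.m, Fin (P.L i)) : P.VertexSpace := Quot.mk _ c

/-- The corner at an end of a side (`b = false`: tail, `b = true`: head). -/
def endCorner (s : Σ i : Fin P.m, Fin (P.L i)) (b : Bool) : Σ i : Fin P.m, Fin (P.L i) :=
  if b then P.nextSide s else s

/-- The direction (half-edge of the wedge of circles) read when leaving the given end of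
the side `s` along `s`. -/
def endDir (s : Σ i : Fin P.m, Fin (P.L i)) (b : Bool) : Letter n :=
  if b then Letter.inv (P.lab s) else P.lab s

/-- The end of the paired side representing the same edge-end of the quotient surface. -/
def pairedEnd (s : Σ i : Fin P.m, Fin (P.L i)) (b : Bool) :
    (Σ i : Fin P.m, Fin (P.L i)) × Bool :=
  (P.pair s, if P.par s then b else !b)

/-- The induced map from the 1-skeleton of the quotient surface to the wedge of circles is
locally injective: at each vertex, distinct edge-ends have distinct directions. -/
def LocallyInjective : Prop :=
  ∀ s₁ b₁ s₂ b₂, P.vClass (P.endCorner s₁ b₁) = P.vClass (P.endCorner s₂ b₂) →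
    P.endDir s₁ b₁ = P.endDir s₂ b₂ →
    ((s₁, b₁) = (s₂, b₂) ∨ (s₂, b₂) = P.pairedEnd s₁ b₁)

/-- The condition `χ(S) < m`, i.e. `V - E < 0` for the quotient surface. -/
def EulerLt : Prop :=
  2 * Nat.card P.VertexSpace < ∑ i : Fin P.m, P.L i

/-- The boundary word of the `i`-th polygon. -/
def bdWord (i : Fin P.m) : List (Letter n) :=
  List.ofFn fun j : Fin (P.L i) => P.lab ⟨i, j⟩

/-- Every polygon boundary reads a nontrivial power of a word of `U` (up to choice of
base point and orientation). -/
def ReadsPowersOf (U : List (FreeGroup (Fin n))) : Prop :=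
  ∀ i : Fin P.m, ∃ u ∈ U, ∃ k r : ℕ, 1 ≤ k ∧
    (P.bdWord i = (List.flatten (List.replicate k u.toWord)).rotate r ∨
     P.bdWord i = (List.flatten (List.replicate k (u⁻¹).toWord)).rotate r)

end PolygonalSurface

/-- A list of cyclically reduced words in the free group is polygonal if some closed
surface obtained from a side-pairing on polygonal disks admits an immersion of its
1-skeleton into the wedge of `n` circles such that every polygon boundary reads a
nontrivial power of a word of `U` and `χ(S) < m`. -/
def Polygonal {n : ℕ} (U : List (FreeGroup (Fin n))) : Prop :=
  ∃ P : PolygonalSurface n, P.ReadsPowersOf U ∧ P.LocallyInjective ∧ P.EulerLt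

/-! ## Directed graphs -/

/-- A directed multigraph. -/
structure Digraph (V : Type*) (E : Type*) where
  src : E → V
  tgt : E → V

namespace Digraph

variable {V E : Type*} (D : Digraph V E)

def inDeg (v : V) : ℕ := {e | D.tgt e = v}.ncard
def outDeg (v : V) : ℕ := {e | D.src e = v}.ncard

/-- Adjacency in the underlying undirected graph. -/
def Adj (a b : V) : Prop := ∃ e, (D.src e = a ∧ D.tgt e = b) ∨ (D.src e = b ∧ D.tgt e = a)

/-- Same connected component. -/
def Reach : V → V → Prop := Relation.EqvGen D.Adj

/-- The connected component of a vertex. -/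
def component (v : V) : Set V := {x | D.Reach v x}

/-- `S` is (the vertex set of) a connected component of `D` that is a directed path of
length `k` whose initial vertex is colored `c₁` and terminal vertex is colored `c₂`
(`true` = red, `false` = blue). -/
def IsPathComp (col : V → Option Bool) (S : Set V) (k : ℕ) (c₁ c₂ : Bool) : Prop :=
  ∃ (vs : Fin (k + 1) → V) (es : Fin k → E),
    Function.Injective vs ∧ Function.Injective es ∧ S = Set.range vs ∧
    (∀ i : Fin k, D.src (es i) = vs i.castSucc ∧ D.tgt (es i) = vs i.succ) ∧
    (∀ e : E, (D.src e ∈ S ∨ D.tgt e ∈ S) → ∃ i, es i = e) ∧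
    col (vs 0) = some c₁ ∧ col (vs (Fin.last k)) = some c₂

/-- `S` is (the vertex set of) a connected component of `D` that is a directed cycle of
length `k`. -/
def IsCycleComp (S : Set V) (k : ℕ) : Prop :=
  ∃ (vs : Fin k → V) (es : Fin k → E),
    Function.Injective vs ∧ Function.Injective es ∧ S = Set.range vs ∧
    (∀ i : Fin k, D.src (es i) = vs i ∧ D.tgt (es i) = vs (cyc i)) ∧
    (∀ e : E, (D.src e ∈ S ∨ D.tgt e ∈ S) → ∃ i, es i = e)

/-- A path or cycle is short if its length is less than three. -/
def Short (k : ℕ) : Prop := k < 3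

/-- At most half of the vertices of `S` are red and at most half are blue. -/
def GoodOn (col : V → Option Bool) (S : Set V) : Prop :=
  2 * {v | v ∈ S ∧ col v = some true}.ncard ≤ S.ncard ∧
  2 * {v | v ∈ S ∧ col v = some false}.ncard ≤ S.ncard

/-- The connected components of `D` contained in `S`. -/
def compsIn (S : Set V) : Set (Set V) := {C | ∃ v ∈ S, C = D.component v}

variable (col : V → Option Bool)

/-- Type (1): a short R-R path, a short B-B path, and possibly a short cycle. -/
def Type1 (S : Set V) : Prop :=
  ∃ C₁ C₂, C₁ ≠ C₂ ∧
    (∃ k, Short k ∧ D.IsPathComp col C₁ k true true) ∧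
    (∃ k, Short k ∧ D.IsPathComp col C₂ k false false) ∧
    (D.compsIn S = {C₁, C₂} ∨
      ∃ C₃, C₃ ≠ C₁ ∧ C₃ ≠ C₂ ∧ (∃ k, Short k ∧ D.IsCycleComp C₃ k) ∧
        D.compsIn S = {C₁, C₂, C₃})

/-- Type (2): a monochromatic path and one or two short cycles. -/
def Type2 (S : Set V) : Prop :=
  ∃ C₀ c, (∃ k, D.IsPathComp col C₀ k c c) ∧
    ((∃ C₁, C₁ ≠ C₀ ∧ (∃ k, Short k ∧ D.IsCycleComp C₁ k) ∧ D.compsIn S = {C₀, C₁}) ∨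
     (∃ C₁ C₂, C₁ ≠ C₀ ∧ C₂ ≠ C₀ ∧ C₁ ≠ C₂ ∧
        (∃ k, Short k ∧ D.IsCycleComp C₁ k) ∧ (∃ k, Short k ∧ D.IsCycleComp C₂ k) ∧
        D.compsIn S = {C₀, C₁, C₂}))

/-- Type (3): a short cycle, a B-R path, and an R-B path. -/
def Type3 (S : Set V) : Prop :=
  ∃ C₁ C₂ C₃, C₁ ≠ C₂ ∧ C₁ ≠ C₃ ∧ C₂ ≠ C₃ ∧
    (∃ k, Short k ∧ D.IsCycleComp C₁ k) ∧
    (∃ k, D.IsPathComp col C₂ k false true) ∧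
    (∃ k, D.IsPathComp col C₃ k true false) ∧
    D.compsIn S = {C₁, C₂, C₃}

/-- Type (4): at least two short cycles. -/
def Type4 (S : Set V) : Prop :=
  (∀ C ∈ D.compsIn S, ∃ k, Short k ∧ D.IsCycleComp C k) ∧ 2 ≤ (D.compsIn S).ncard

/-- Type (5): a long monochromatic path and monochromatic short paths, possibly none. -/
def Type5 (S : Set V) : Prop :=
  ∃ C₀ ∈ D.compsIn S, (∃ k c, ¬ Short k ∧ D.IsPathComp col C₀ k c c) ∧
    ∃ c', ∀ C ∈ D.compsIn S, C ≠ C₀ → ∃ k, Short k ∧ D.IsPathComp col C k c' c'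

/-- Type (6): a B-R path, an R-B path, and monochromatic short paths, possibly none. -/
def Type6 (S : Set V) : Prop :=
  ∃ C₁ ∈ D.compsIn S, ∃ C₂ ∈ D.compsIn S, C₁ ≠ C₂ ∧
    (∃ k, D.IsPathComp col C₁ k false true) ∧
    (∃ k, D.IsPathComp col C₂ k true false) ∧
    ∃ c', ∀ C ∈ D.compsIn S, C ≠ C₁ → C ≠ C₂ → ∃ k, Short k ∧ D.IsPathComp col C k c' c'

/-- Type (7): a long cycle and monochromatic short paths, possibly none. -/
def Type7 (S : Set V) : Prop :=
  ∃ C₀ ∈ D.compsIn S, (∃ k, ¬ Short k ∧ D.IsCycleComp C₀ k) ∧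
    ∃ c', ∀ C ∈ D.compsIn S, C ≠ C₀ → ∃ k, Short k ∧ D.IsPathComp col C k c' c'

/-- Type (8): a long cycle and a short cycle. -/
def Type8 (S : Set V) : Prop :=
  ∃ C₁ C₂, C₁ ≠ C₂ ∧ (∃ k, ¬ Short k ∧ D.IsCycleComp C₁ k) ∧
    (∃ k, Short k ∧ D.IsCycleComp C₂ k) ∧ D.compsIn S = {C₁, C₂}

end Digraph

/-! ## Good and uniform permutations -/

/-- `π` is a `w`-good permutation of `δ(w)`: `{e, σ_w(π(e))}` is a matching for every
`e ∈ δ(w)`. -/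
def WGood {V E : Type*} (G : Multigraph V E) (w : V) (σw : E → E) (π : E → E) : Prop :=
  ∀ e ∈ G.edgeNbhd w, G.IsMatchingPair e (σw (π e))

/-- `O` is an orbit of the map `g`. -/
def IsOrbitOf {α : Type*} (g : α → α) (O : Set α) : Prop :=
  ∃ p ∈ O, O = {q | ∃ t : ℕ, g^[t] p = q}

/-- A `w`-good permutation `π` of `δ(w)` is uniform if the induced permutation `π⁽²⁾` of
the 2-element subsets of `δ(w)` has a list of orbits `X₁, …, X_t` such that (i) paired
edges share no vertex other than `w` or `μ(w)`, and (ii) every edge of `δ(w)` is covered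
the same number `c > 0` of times by the members of the orbits in the list. -/
def UniformPerm {V E : Type*} (G : Multigraph V E) (μ : V → V) (w : V) (π : E → E) : Prop :=
  ∃ Xs : List (Set (Sym2 E)),
    (∀ X ∈ Xs, IsOrbitOf (Sym2.map π) X ∧
      ∀ q ∈ X, ¬ q.IsDiag ∧ ∀ x ∈ q, x ∈ G.edgeNbhd w) ∧
    (∀ X ∈ Xs, ∀ x y : E, s(x, y) ∈ X →
      ∀ z : V, z ∈ G.ends x → z ∈ G.ends y → z = w ∨ z = μ w) ∧
    (∃ c : ℕ, 0 < c ∧ ∀ e ∈ G.edgeNbhd w,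
      (Xs.map fun X => {F | F ∈ X ∧ e ∈ F}.ncard).sum = c)

/-! ## The auxiliary directed graph at a vertex -/

/-- The vertex set of the auxiliary directed graph `D` at `w`: the disjoint union of
`{e₁, …, e_m} = δ(w)` and `{f₁, …, f_m} = δ(μ(w))`. -/
def AuxV {V E : Type*} (G : Multigraph V E) (μ : V → V) (w : V) : Type _ :=
  {e // e ∈ G.edgeNbhd w} ⊕ {f // f ∈ G.edgeNbhd (μ w)}

/-- The edges of the auxiliary directed graph: an edge from `fᵢ` to `eᵢ` (where
`fᵢ = σ_w(eᵢ)`) for each `i`, and an edge from `eᵢ` to `fⱼ` whenever `eᵢ` and `fⱼ` denote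
the same edge of `G`. -/
def auxBase {V E : Type*} (G : Multigraph V E) (μ : V → V) (w : V) (σw : E → E) :
    AuxV G μ w → AuxV G μ w → Prop := fun x y =>
  (∃ f e, x = Sum.inr f ∧ y = Sum.inl e ∧ σw (e : E) = (f : E)) ∨
  (∃ e f, x = Sum.inl e ∧ y = Sum.inr f ∧ (e : E) = (f : E))

/-- The coloring of the vertices of the auxiliary directed graph (`true` = red,
`false` = blue). -/
def auxCol {V E : Type*} (G : Multigraph V E) (μ : V → V) (w u : V) :
    AuxV G μ w → Option Bool
  | Sum.inl e =>
      if u ∈ G.ends (e : E) then some true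
      else if μ u ∈ G.ends (e : E) then some false else none
  | Sum.inr f =>
      if u ∈ G.ends (f : E) then some false
      else if μ u ∈ G.ends (f : E) then some true else none

/-- `st` is (the edge relation of) a completion `D'` of the auxiliary directed graph `D`:
it is obtained from `D` by adding one edge from each vertex of out-degree 0 to a vertex of
in-degree 0 with the same color, so that every vertex has in-degree 1 and out-degree 1. -/
def IsCompletion {V E : Type*} (G : Multigraph V E) (μ : V → V) (w u : V) (σw : E → E)
    (st : AuxV G μ w → AuxV G μ w → Prop) : Prop :=
  (∀ x y, auxBase G μ w σw x y → st x y) ∧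
  (∀ x y, st x y → ¬ auxBase G μ w σw x y →
    (∀ z, ¬ auxBase G μ w σw x z) ∧ (∀ z, ¬ auxBase G μ w σw z y) ∧
    (auxCol G μ w u x).isSome ∧ auxCol G μ w u x = auxCol G μ w u y) ∧
  (∀ x, ∃! y, st x y) ∧ (∀ y, ∃! x, st x y)

/-- `π` is the permutation of `δ(w)` induced by the completion `st`: `π(eᵢ) = eⱼ` if and
only if `D'` has a directed walk of length two from `eᵢ` to `eⱼ`. -/
def InducedByWalks {V E : Type*} (G : Multigraph V E) (μ : V → V) (w : V)
    (st : AuxV G μ w → AuxV G μ w → Prop) (π : E → E) : Prop :=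
  ∀ e (he : e ∈ G.edgeNbhd w) e' (he' : e' ∈ G.edgeNbhd w),
    (π e = e' ↔ ∃ mid, st (Sum.inl ⟨e, he⟩) mid ∧ st mid (Sum.inl ⟨e', he'⟩))




/-! ## Auxiliary lemmas for Statement 5 -/

lemma Letter.inv_inv {n : ℕ} (a : Letter n) : Letter.inv (Letter.inv a) = a := by
  simp [Letter.inv]

lemma cyc_cycPrev {m : ℕ} (i : Fin m) : cyc (cycPrev i) = i := by
  have hm : 0 < m := i.pos
  apply Fin.ext
  show ((i.val + m - 1) % m + 1) % m = i.val
  rw [Nat.mod_add_mod, show i.val + m - 1 + 1 = i.val + m by omega, Nat.add_mod_right,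
    Nat.mod_eq_of_lt i.isLt]

lemma flatten_replicate_length {α : Type*} (k : ℕ) (w : List α) :
    (List.replicate k w).flatten.length = k * w.length := by
  induction k with
  | zero => simp
  | succ k ih =>
    rw [List.replicate_succ, List.flatten_cons, List.length_append, ih, Nat.succ_mul]
    omega

lemma getElem_flatten_replicate {α : Type*} (k : ℕ) (w : List α) (hw : 0 < w.length)
    (i : ℕ) (h : i < (List.replicate k w).flatten.length) :
    (List.replicate k w).flatten[i] = w[i % w.length]'(Nat.mod_lt _ hw) := by
  induction k generalizing i with
  | zero => simp at h
  | succ k ih =>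
    simp only [List.replicate_succ, List.flatten_cons] at h ⊢
    rcases lt_or_ge i w.length with h1 | h1
    · rw [List.getElem_append_left h1]
      congr 1
      exact (Nat.mod_eq_of_lt h1).symm
    · rw [List.getElem_append_right h1, ih]
      congr 1
      conv_rhs => rw [show i = (i - w.length) + w.length by omega, Nat.add_mod_right]

lemma getElem_invRev' {n : ℕ} (w : List (Letter n)) (t : ℕ)
    (h1 : t < (FreeGroup.invRev w).length) :
    (FreeGroup.invRev w)[t] =
      Letter.inv (w[w.length - 1 - t]'(by
        rw [FreeGroup.invRev_length] at h1; omega)) := by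
  have h1' : t < (List.map (fun g : Letter n => (g.1, !g.2)) w).reverse.length := by
    simpa [FreeGroup.invRev] using h1
  show (List.map (fun g : Letter n => (g.1, !g.2)) w).reverse[t]'h1' = _
  rw [List.getElem_reverse, List.getElem_map]
  simp [Letter.inv]

lemma get_congr {α : Type*} (w : List α) (a b : ℕ) (ha : a < w.length) (hb : b < w.length)
    (h : a = b) : w[a]'ha = w[b]'hb := by
  subst h; rfl

/-! ## The statement -/

theorem stmt5 (n : ℕ) (U : List (FreeGroup (Fin n)))
    (hcr : ∀ u ∈ U, CyclicallyReduced u)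
    (l : ℕ) (hl : 0 < l) (x : Fin l → Letter n)
    (hx : ∀ i : Fin l, x (cyc i) ≠ Letter.inv (x i))
    (f : Fin (l + 1) → WEdge U) (f₀ : WEdge U)
    (hf0 : f 0 = f₀) (hfl : f (Fin.last l) = f₀)
    (hchain : ∀ i : Fin l, ConnStep U (Letter.inv (x i)) (f i.castSucc) (f i.succ)) :
    ∃ u ∈ U, ∃ k r : ℕ, 1 ≤ k ∧
      (List.ofFn x = List.flatten (List.replicate k (u.toWord.rotate r)) ∨
       List.ofFn x = List.flatten (List.replicate k ((u⁻¹).toWord.rotate r))) := by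
  clear hcr
  obtain ⟨i₀, j₀⟩ := f₀
  have hL : 0 < (wordAt U i₀).length := j₀.pos
  have hwlen : (U.get i₀).toWord.length = (wordAt U i₀).length := rfl
  have h00 : (⟨0, Nat.succ_pos l⟩ : Fin (l + 1)) = 0 := by
    apply Fin.ext; simp
  have hlast : (⟨l, Nat.lt_succ_self l⟩ : Fin (l + 1)) = Fin.last l := rfl
  have step : ∀ m (hm : m < l),
      (f ⟨m + 1, by omega⟩ = wNext (f ⟨m, by omega⟩) ∧
        wLetter (f ⟨m + 1, by omega⟩) = x ⟨m, hm⟩) ∨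
      (f ⟨m + 1, by omega⟩ = wPrev (f ⟨m, by omega⟩) ∧
        wLetter (f ⟨m, by omega⟩) = Letter.inv (x ⟨m, hm⟩)) := by
    intro m hm
    obtain ⟨-, h | h⟩ := hchain ⟨m, hm⟩
    · left
      refine ⟨h.2, ?_⟩
      have h2 := congrArg Letter.inv h.1
      rw [Letter.inv_inv, Letter.inv_inv] at h2
      exact (congrArg wLetter h.2).trans h2
    · right
      exact ⟨h.2, h.1⟩
  have dich : (∀ m (hm : m < l), f ⟨m + 1, by omega⟩ = wNext (f ⟨m, by omega⟩) ∧
        wLetter (f ⟨m + 1, by omega⟩) = x ⟨m, hm⟩) ∨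
      (∀ m (hm : m < l), f ⟨m + 1, by omega⟩ = wPrev (f ⟨m, by omega⟩) ∧
        wLetter (f ⟨m, by omega⟩) = Letter.inv (x ⟨m, hm⟩)) := by
    have wnp : ∀ e : WEdge U, wNext (wPrev e) = e := by
      rintro ⟨e1, e2⟩
      show (⟨e1, cyc (cycPrev e2)⟩ : WEdge U) = ⟨e1, e2⟩
      rw [cyc_cycPrev]
    rcases step 0 hl with h0 | h0
    · left
      intro m
      induction m with
      | zero => intro hm; exact h0
      | succ m ih =>
        intro hm
        have hm' : m < l := by omega
        have Fm := ih hm'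
        rcases step (m + 1) hm with h | h
        · exact h
        · exfalso
          have e1 : x ⟨m, hm'⟩ = Letter.inv (x ⟨m + 1, hm⟩) := by rw [← Fm.2, h.2]
          apply hx ⟨m, hm'⟩
          have hcyc : cyc (⟨m, hm'⟩ : Fin l) = ⟨m + 1, hm⟩ := by
            apply Fin.ext; exact Nat.mod_eq_of_lt hm
          rw [hcyc, e1, Letter.inv_inv]
    · right
      intro m
      induction m with
      | zero => intro hm; exact h0
      | succ m ih =>
        intro hm
        have hm' : m < l := by omega
        have Bm := ih hm'
        rcases step (m + 1) hm with h | h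
        · exfalso
          have e2 : f ⟨m + 1 + 1, by omega⟩ = f ⟨m, by omega⟩ := by
            rw [h.1, Bm.1, wnp]
          have e1 : x ⟨m + 1, hm⟩ = Letter.inv (x ⟨m, hm'⟩) := by
            rw [← h.2, e2, Bm.2]
          apply hx ⟨m, hm'⟩
          have hcyc : cyc (⟨m, hm'⟩ : Fin l) = ⟨m + 1, hm⟩ := by
            apply Fin.ext; exact Nat.mod_eq_of_lt hm
          rw [hcyc, e1]
        · exact h
  rcases dich with hdir | hdir
  · -- forward direction
    have pos : ∀ m, ∀ hm0 : m ≤ l, f ⟨m, by omega⟩ =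
        ⟨i₀, ⟨(j₀.val + m) % (wordAt U i₀).length, Nat.mod_lt _ hL⟩⟩ := by
      intro m
      induction m with
      | zero =>
        intro _
        rw [h00, hf0]
        refine congrArg (Sigma.mk i₀) (Fin.ext ?_)
        simp [Nat.mod_eq_of_lt j₀.isLt]
      | succ m ih =>
        intro hm
        rw [(hdir m (by omega)).1, ih (by omega)]
        show (⟨i₀, cyc ⟨(j₀.val + m) % (wordAt U i₀).length, Nat.mod_lt _ hL⟩⟩ : WEdge U) = _
        refine congrArg (Sigma.mk i₀) (Fin.ext ?_)
        show ((j₀.val + m) % (wordAt U i₀).length + 1) % (wordAt U i₀).length = (j₀.val + (m + 1)) % (wordAt U i₀).length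
        rw [Nat.mod_add_mod]
        exact congrArg (· % (wordAt U i₀).length) (by omega)
    have hdvd : (wordAt U i₀).length ∣ l := by
      have h1 := pos l le_rfl
      rw [hlast, hfl] at h1
      have h3 : j₀.val = (j₀.val + l) % (wordAt U i₀).length := congrArg (fun e : WEdge U => (e.2 : ℕ)) h1
      have h4 : j₀.val ≡ j₀.val + l [MOD (wordAt U i₀).length] := by
        show j₀.val % (wordAt U i₀).length = (j₀.val + l) % (wordAt U i₀).length
        rw [Nat.mod_eq_of_lt j₀.isLt]
        exact h3
      simpa using (Nat.modEq_iff_dvd' (Nat.le_add_right _ _)).mp h4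
    have hk1 : 1 ≤ l / (wordAt U i₀).length := Nat.div_pos (Nat.le_of_dvd hl hdvd) hL
    refine ⟨U.get i₀, List.get_mem U i₀, l / (wordAt U i₀).length, j₀.val + 1, hk1, Or.inl ?_⟩
    have hrotlen : ((U.get i₀).toWord.rotate (j₀.val + 1)).length = (wordAt U i₀).length := by
      rw [List.length_rotate, hwlen]
    apply List.ext_getElem
    · rw [List.length_ofFn, flatten_replicate_length, hrotlen, Nat.div_mul_cancel hdvd]
    · intro i h1 h2
      have hil : i < l := by simpa using h1
      have hx2 := (hdir i hil).2
      rw [pos (i + 1) (by omega)] at hx2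
      rw [List.getElem_ofFn, ← hx2,
        getElem_flatten_replicate _ _ (by rw [hrotlen]; exact hL) _ h2,
        List.getElem_rotate]
      refine get_congr (wordAt U i₀) _ _ _ _ ?_
      rw [hrotlen, hwlen, Nat.mod_add_mod]
      congr 1
      omega
  · -- backward direction
    have pos : ∀ m, ∀ hm0 : m ≤ l, ∃ (p : ℕ) (hp : p < (wordAt U i₀).length),
        f ⟨m, by omega⟩ = ⟨i₀, ⟨p, hp⟩⟩ ∧ (p + m) % (wordAt U i₀).length = j₀.val := by
      intro m
      induction m with
      | zero =>
        intro _
        refine ⟨j₀.val, j₀.isLt, ?_, by simpa using Nat.mod_eq_of_lt j₀.isLt⟩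
        rw [h00, hf0]
      | succ m ih =>
        intro hm
        obtain ⟨p, hp, hfm, hmod⟩ := ih (by omega)
        refine ⟨(p + (wordAt U i₀).length - 1) % (wordAt U i₀).length, Nat.mod_lt _ hL, ?_, ?_⟩
        · rw [(hdir m (by omega)).1, hfm]
          show (⟨i₀, cycPrev ⟨p, hp⟩⟩ : WEdge U) = _
          refine congrArg (Sigma.mk i₀) (Fin.ext ?_)
          rfl
        · rw [Nat.mod_add_mod, show p + (wordAt U i₀).length - 1 + (m + 1) = p + m + (wordAt U i₀).length by omega,
            Nat.add_mod_right]
          exact hmod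
    have hdvd : (wordAt U i₀).length ∣ l := by
      obtain ⟨p, hp, hfm, hmod⟩ := pos l le_rfl
      rw [hlast, hfl] at hfm
      have hpj : j₀.val = p := congrArg (fun e : WEdge U => (e.2 : ℕ)) hfm
      rw [← hpj] at hmod
      have h4 : j₀.val ≡ j₀.val + l [MOD (wordAt U i₀).length] := by
        show j₀.val % (wordAt U i₀).length = (j₀.val + l) % (wordAt U i₀).length
        rw [Nat.mod_eq_of_lt j₀.isLt]
        exact hmod.symm
      simpa using (Nat.modEq_iff_dvd' (Nat.le_add_right _ _)).mp h4
    have hk1 : 1 ≤ l / (wordAt U i₀).length := Nat.div_pos (Nat.le_of_dvd hl hdvd) hL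
    refine ⟨U.get i₀, List.get_mem U i₀, l / (wordAt U i₀).length, (wordAt U i₀).length - 1 - j₀.val, hk1, Or.inr ?_⟩
    have hinvlen : ((U.get i₀)⁻¹).toWord.length = (wordAt U i₀).length := by
      rw [FreeGroup.toWord_inv, FreeGroup.invRev_length, hwlen]
    have hrotlen : (((U.get i₀)⁻¹).toWord.rotate ((wordAt U i₀).length - 1 - j₀.val)).length = (wordAt U i₀).length := by
      rw [List.length_rotate, hinvlen]
    apply List.ext_getElem
    · rw [List.length_ofFn, flatten_replicate_length, hrotlen, Nat.div_mul_cancel hdvd]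
    · intro i h1 h2
      have hil : i < l := by simpa using h1
      obtain ⟨p, hp, hfm, hmod⟩ := pos i (by omega)
      have hx2 : Letter.inv (wLetter (f ⟨i, by omega⟩)) = x ⟨i, hil⟩ := by
        rw [(hdir i hil).2, Letter.inv_inv]
      rw [hfm] at hx2
      rw [List.getElem_ofFn, ← hx2,
        getElem_flatten_replicate _ _ (by rw [hrotlen]; exact hL) _ h2,
        List.getElem_rotate]
      simp only [FreeGroup.toWord_inv]
      rw [getElem_invRev']
      refine congrArg Letter.inv ?_
      refine get_congr (wordAt U i₀) _ _ _ _ ?_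
      simp only [List.length_rotate, FreeGroup.invRev_length, hwlen]
      have hj : j₀.val < (wordAt U i₀).length := j₀.isLt
      set t := (i % (wordAt U i₀).length + ((wordAt U i₀).length - 1 - j₀.val)) % (wordAt U i₀).length with htdef
      have ht : t < (wordAt U i₀).length := Nat.mod_lt _ hL
      have hzero : (p + t + 1) % (wordAt U i₀).length = 0 := by
        calc (p + t + 1) % (wordAt U i₀).length
            = (t + (p + 1)) % (wordAt U i₀).length := by congr 1; omega
          _ = ((i % (wordAt U i₀).length + ((wordAt U i₀).length - 1 - j₀.val)) % (wordAt U i₀).length + (p + 1)) % (wordAt U i₀).length := by rw [htdef]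
          _ = (i % (wordAt U i₀).length + ((wordAt U i₀).length - 1 - j₀.val) + (p + 1)) % (wordAt U i₀).length := by rw [Nat.mod_add_mod]
          _ = (i % (wordAt U i₀).length + (((wordAt U i₀).length - 1 - j₀.val) + (p + 1))) % (wordAt U i₀).length := by congr 1; omega
          _ = (i + (((wordAt U i₀).length - 1 - j₀.val) + (p + 1))) % (wordAt U i₀).length := by rw [Nat.mod_add_mod]
          _ = ((p + i) + ((wordAt U i₀).length - j₀.val)) % (wordAt U i₀).length := by congr 1; omega
          _ = ((p + i) % (wordAt U i₀).length + ((wordAt U i₀).length - j₀.val)) % (wordAt U i₀).length := by rw [Nat.mod_add_mod]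
          _ = (j₀.val + ((wordAt U i₀).length - j₀.val)) % (wordAt U i₀).length := by rw [hmod]
          _ = (wordAt U i₀).length % (wordAt U i₀).length := by congr 1; omega
          _ = 0 := Nat.mod_self (wordAt U i₀).length
      have hsum : p + t + 1 = (wordAt U i₀).length := by
        obtain ⟨c, hc⟩ := Nat.dvd_of_mod_eq_zero hzero
        rcases c with _ | _ | c
        · omega
        · omega
        · exfalso
          have h2L : (wordAt U i₀).length * 2 ≤ (wordAt U i₀).length * (c + 2) := Nat.mul_le_mul_left (wordAt U i₀).length (by omega)
          rw [← hc] at h2L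
          omega
      omega


end

end KO
end

section
/- Let G = (V,E) be a k-regular graph with a fixed point free involution μ : V → V such that λ(v,μ(v)) = k for every vertex v ∈ V. Then G is a k-graph, i.e., |δ(X)| ≥ k for every subset X of V of odd cardinality. -/
open scoped Classical

namespace KO

noncomputable section

/-! ### Auxiliary lemmas for STATEMENT 10 -/

/-- A set closed under a fixed-point-free involution has even cardinality. -/
lemma even_ncard_of_closed {V : Type} [Fintype V] (μ : V → V) (hinv : ∀ v, μ (μ v) = v)
    (hfpf : ∀ v, μ v ≠ v) :
    ∀ n (X : Set V), X.ncard = n → (∀ v ∈ X, μ v ∈ X) → Even n := by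
  intro n
  induction n using Nat.strong_induction_on with
  | _ n ih =>
    intro X hcard hcl
    rcases X.eq_empty_or_nonempty with rfl | ⟨v, hv⟩
    · simp only [Set.ncard_empty] at hcard; exact hcard ▸ Even.zero
    · have hμv : μ v ∈ X := hcl v hv
      have hne : μ v ≠ v := hfpf v
      set Y : Set V := X \ {v, μ v} with hY
      have hYcl : ∀ w ∈ Y, μ w ∈ Y := by
        rintro w ⟨hwX, hw⟩
        refine ⟨hcl w hwX, ?_⟩
        simp only [Set.mem_insert_iff, Set.mem_singleton_iff] at hw ⊢
        push_neg at hw ⊢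
        constructor
        · intro h; exact hw.2 (by rw [← h, hinv])
        · intro h; exact hw.1 (by have := congrArg μ h; rwa [hinv, hinv] at this)
      have hXfin : X.Finite := Set.toFinite X
      have hsub : ({v, μ v} : Set V) ⊆ X := by
        rintro x (rfl | rfl); exacts [hv, hμv]
      have h2 : ({v, μ v} : Set V).ncard = 2 := Set.ncard_pair hne.symm
      have hdiff : Y.ncard = n - 2 := by
        have := Set.ncard_diff hsub
        rw [hcard, h2] at this; exact this
      have hle : 2 ≤ n := by
        have := Set.ncard_le_ncard hsub hXfin
        rwa [h2, hcard] at this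
      have hev : Even (n - 2) := ih (n - 2) (by omega) Y hdiff hYcl
      obtain ⟨m, hm⟩ := hev
      exact ⟨m + 1, by omega⟩

/-- First-crossing lemma. -/
lemma exists_crossing {V : Type} {m : ℕ} (f : Fin (m + 1) → V) (X : Set V)
    (h0 : f 0 ∈ X) (hl : f (Fin.last m) ∉ X) :
    ∃ i : Fin m, f i.castSucc ∈ X ∧ f i.succ ∉ X := by
  by_contra h
  push_neg at h
  have hall : ∀ j : Fin (m + 1), f j ∈ X := by
    intro j
    induction j using Fin.induction with
    | zero => exact h0
    | succ i ih => exact h i ih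
  exact hl (hall _)

/-! ## The statement -/

theorem stmt10 {V E : Type} [Fintype V] [Fintype E] (G : Multigraph V E) (k : ℕ)
    (μ : V → V) (hinv : ∀ v, μ (μ v) = v) (hfpf : ∀ v, μ v ≠ v)
    (hreg : ∀ v, G.deg v = k) (hlam : ∀ v, G.localEdgeConn v (μ v) = k) :
    ∀ X : Set V, Odd X.ncard → k ≤ (G.cut X).ncard := by
  intro X hodd
  -- find a vertex of `X` sent outside `X` by `μ`
  have hex : ∃ v ∈ X, μ v ∉ X := by
    by_contra h
    push_neg at h
    have := even_ncard_of_closed μ hinv hfpf X.ncard X rfl h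
    exact (Nat.not_even_iff_odd.mpr hodd) this
  obtain ⟨v, hvX, hμvX⟩ := hex
  -- the set of numbers of edge-disjoint path systems
  set S : Set ℕ := {k : ℕ | ∃ P : Fin k → G.PathIn v (μ v),
    ∀ i j, i ≠ j → ∀ a b, (P i).e a ≠ (P j).e b} with hS
  have hne : v ≠ μ v := (hfpf v).symm
  -- every path has positive length
  have hlenpos : ∀ p : G.PathIn v (μ v), 0 < p.len := by
    intro p
    rcases Nat.eq_zero_or_pos p.len with h0 | h
    · exfalso
      apply hne
      have h01 : (0 : Fin (p.len + 1)) = Fin.last p.len := by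
        ext; simp [h0]
      calc v = p.v 0 := p.hx.symm
        _ = p.v (Fin.last p.len) := congrArg p.v h01
        _ = μ v := p.hy
    · exact h
  have hbdd : BddAbove S := by
    refine ⟨Fintype.card E, ?_⟩
    rintro m ⟨P, hP⟩
    have : Function.Injective fun i : Fin m => (P i).e ⟨0, hlenpos (P i)⟩ := by
      intro i j hij
      by_contra hij'
      exact hP i j hij' _ _ hij
    simpa using Fintype.card_le_of_injective _ this
  have h0S : (0 : ℕ) ∈ S := ⟨Fin.elim0, fun i => i.elim0⟩
  have hkS : k ∈ S := by
    rw [← hlam v, Multigraph.localEdgeConn]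
    exact Nat.sSup_mem ⟨0, h0S⟩ hbdd
  obtain ⟨P, hP⟩ := hkS
  -- each path crosses the cut
  have hcross : ∀ i : Fin k, ∃ a : Fin (P i).len, (P i).e a ∈ G.cut X := by
    intro i
    obtain ⟨a, ha1, ha2⟩ := exists_crossing (P i).v X
      (by rw [(P i).hx]; exact hvX) (by rw [(P i).hy]; exact hμvX)
    exact ⟨a, (P i).v a.castSucc, (P i).v a.succ, (P i).hends a, ha1, ha2⟩
  choose a ha using hcross
  have hinj : Function.Injective fun i : Fin k => (⟨(P i).e (a i), ha i⟩ : G.cut X) := by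
    intro i j hij
    by_contra hij'
    exact hP i j hij' _ _ (congrArg Subtype.val hij)
  calc k = Nat.card (Fin k) := by simp
    _ ≤ Nat.card (G.cut X) := Nat.card_le_card_of_injective _ hinj
    _ = (G.cut X).ncard := Nat.card_coe_set_eq _


end

end KO
end

section
/- In the setting of the auxiliary directed graph D at the vertex w of G: let D' be any completion of D, i.e., a directed graph obtained from D by adding one edge from each vertex of out-degree 0 to a vertex of in-degree 0 of the same color, so that every vertex of D' has in-degree 1 and out-degree 1. Let π be the permutation of δ(w) = {e_1,...,e_m} defined by π(e_i) = e_j if and only if D' has a directed walk of length two from e_i to e_j. Then π is a w-good permutation. -/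
open scoped Classical

namespace KO

noncomputable section

/-! ## The statement -/

theorem stmt15 {V E : Type} [Fintype V] [Fintype E] (G : Multigraph V E)
    (hcard : Nat.card V = 4) (hconn : ∀ a b : V, G.Reach a b)
    (μ : V → V) (hinv : ∀ v, μ (μ v) = v) (hfpf : ∀ v, μ v ≠ v)
    (hlam : ∀ v, G.localEdgeConn v (μ v) = G.deg v)
    (w : V) (hwmin : ∀ v, G.deg w ≤ G.deg v)
    (σw : E → E) (hσ : Set.BijOn σw (G.edgeNbhd w) (G.edgeNbhd (μ w)))
    (u : V) (hu1 : u ≠ w) (hu2 : u ≠ μ w)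
    (st : AuxV G μ w → AuxV G μ w → Prop) (hst : IsCompletion G μ w u σw st)
    (π : E → E) (hπ : InducedByWalks G μ w st π) :
    WGood G w σw π := by
  intro e he
  obtain ⟨hbase, hadd, hex, hexin⟩ := hst
  obtain ⟨mid, hmid, -⟩ := hex (Sum.inl ⟨e, he⟩)
  -- mid is an inr vertex, i.e. an f
  have hmidr : ∃ f : {f // f ∈ G.edgeNbhd (μ w)}, mid = Sum.inr f := by
    by_cases hb : auxBase G μ w σw (Sum.inl ⟨e, he⟩) mid
    · rcases hb with ⟨f, e₀, hx, -, -⟩ | ⟨e₀, f, -, hy, -⟩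
      · exact absurd hx (by simp)
      · exact ⟨f, hy⟩
    · obtain ⟨-, hnoin, -, -⟩ := hadd _ _ hmid hb
      cases mid with
      | inl e₀ =>
        exact absurd (Or.inl ⟨⟨σw e₀, hσ.mapsTo e₀.2⟩, e₀, rfl, rfl, rfl⟩)
          (hnoin (Sum.inr ⟨σw e₀, hσ.mapsTo e₀.2⟩))
      | inr f => exact ⟨f, rfl⟩
  obtain ⟨f, rfl⟩ := hmidr
  -- the successor of f
  obtain ⟨z, hz, -⟩ := hex (Sum.inr f)
  have hzb : auxBase G μ w σw (Sum.inr f) z := by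
    by_contra hb
    obtain ⟨hnoout, -, -, -⟩ := hadd _ _ hz hb
    obtain ⟨e'', he'', hσe''⟩ := hσ.surjOn f.2
    exact hnoout (Sum.inl ⟨e'', he''⟩) (Or.inl ⟨f, ⟨e'', he''⟩, rfl, rfl, hσe''⟩)
  obtain ⟨f₀, e₀, hf₀, hz', hσ₀⟩ | ⟨e₀, f₀, h, -, -⟩ := hzb
  swap
  · exact absurd h (by simp)
  obtain rfl : f = f₀ := by injection hf₀
  obtain ⟨e', he'⟩ := e₀
  subst hz'
  -- compute π e
  have hπe : π e = e' := (hπ e he e' he').mpr ⟨Sum.inr f, hmid, hz⟩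
  have hσπ : σw (π e) = (f : E) := by rw [hπe]; exact hσ₀
  rw [hσπ]
  -- case split on whether the first step is a base edge
  by_cases hb : auxBase G μ w σw (Sum.inl ⟨e, he⟩) (Sum.inr f)
  · -- then e = f as an edge of G
    rcases hb with ⟨f₁, e₁, hx, -, -⟩ | ⟨e₁, f₁, hx, hy, hef⟩
    · exact absurd hx (by simp)
    · left
      have h1 : (⟨e, he⟩ : {e // e ∈ G.edgeNbhd w}) = e₁ := by injection hx
      have h2 : f = f₁ := by injection hy
      rw [h2, ← hef, ← h1]
  · obtain ⟨-, -, hsome, hcoleq⟩ := hadd _ _ hmid hb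
    simp only [auxCol] at hsome hcoleq
    -- distinctness facts
    have hwu : w ≠ μ u := fun h => hu2 (by rw [h, hinv])
    have hmm : μ u ≠ μ w := fun h => hu1 (by
      have := congrArg μ h; rwa [hinv, hinv] at this)
    right
    intro z hzz
    obtain ⟨hze, hzf⟩ := hzz
    obtain ⟨x, hx⟩ := (Sym2.mem_iff_exists).mp he.1
    obtain ⟨y, hy⟩ := (Sym2.mem_iff_exists).mp f.2.1
    have key : (u ∈ G.ends e ∧ μ u ∈ G.ends (f : E)) ∨
        (μ u ∈ G.ends e ∧ u ∈ G.ends (f : E)) := by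
      by_cases h1 : u ∈ G.ends e <;> by_cases h2 : μ u ∈ G.ends e <;>
        by_cases h3 : u ∈ G.ends (f : E) <;> by_cases h4 : μ u ∈ G.ends (f : E) <;>
        simp_all
    rcases key with ⟨h1, h2⟩ | ⟨h1, h2⟩
    · have hxu : x = u := by
        rw [hx, Sym2.mem_iff] at h1
        rcases h1 with h | h
        · exact absurd h hu1
        · exact h.symm
      have hyu : y = μ u := by
        rw [hy, Sym2.mem_iff] at h2
        rcases h2 with h | h
        · exact absurd h hmm
        · exact h.symm
      rw [hx, hxu, Sym2.mem_iff] at hze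
      rw [hy, hyu, Sym2.mem_iff] at hzf
      rcases hze with h0 | h0 <;> rcases hzf with h | h
      · exact hfpf w (h0.symm.trans h).symm
      · exact hwu (h0.symm.trans h)
      · exact hu2 (h0.symm.trans h)
      · exact hfpf u (h0.symm.trans h).symm
    · have hxu : x = μ u := by
        rw [hx, Sym2.mem_iff] at h1
        rcases h1 with h | h
        · exact absurd h.symm hwu
        · exact h.symm
      have hyu : y = u := by
        rw [hy, Sym2.mem_iff] at h2
        rcases h2 with h | h
        · exact absurd h hu2
        · exact h.symm
      rw [hx, hxu, Sym2.mem_iff] at hze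
      rw [hy, hyu, Sym2.mem_iff] at hzf
      rcases hze with h0 | h0 <;> rcases hzf with h | h
      · exact hfpf w (h0.symm.trans h).symm
      · exact hu1 (h.symm.trans h0)
      · exact hmm (h0.symm.trans h)
      · exact hfpf u (h0.symm.trans h)

end

end KO
end
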